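/- Let G be a finite group such that (G, Z(G)) is a generalized Camina pair. Then for 1 ≠ g ∈ G', the number of pairs (a,b) ∈ G × G with [a,b] = g equals (|G|²/|G'|)(1 − 1/|G:Z(G)|), and the number of pairs with [a,b] = 1 equals (|G|²/|G'|)(1 + (|G'|−1)/|G:Z(G)|). -/

import Mathlib

open scoped BigOperators

/-- `χ : G → ℂ` is an irreducible (complex) character of `G`. -/
def IsIrrChar (G : Type) [Group G] (χ : G → ℂ) : Prop :=
  ∃ V : FDRep ℂ G, CategoryTheory.Simple V ∧ χ = V.character

/-- The commutator `[a,b] = a⁻¹ b⁻¹ a b`. -/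
def wcomm {G : Type} [Group G] (a b : G) : G := a⁻¹ * b⁻¹ * a * b

/-- The left-normed iterated commutator word
`w_n(x₁,…,xₙ) = [⋯[[x₁,x₂],x₃],⋯,xₙ]` (for `n = 0` we set it to `1`). -/
def wIter {G : Type} [Group G] : (n : ℕ) → (Fin n → G) → G
  | 0, _ => 1
  | (n+1), x => (List.ofFn fun i : Fin n => x i.succ).foldl wcomm (x 0)

/-!
Fix `a ∉ Z(G)`. The element `c = ∑_b b⁻¹ a b` of `ℂ[G]` is central, so by Schur it acts by
a scalar `μ_M` on every simple `ℂ[G]`-module `M`, and taking traces gives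
`μ_M χ_M(1) = |G| χ_M(a)`. If `χ_M` is nonlinear then `χ_M(a) = 0`, hence `μ_M = 0`; if it
is linear it is trivial on `G'`. Decomposing the regular module into simple left ideals,
`|G| · #{b | b⁻¹ a b g = 1} = tr(c g) = ∑_M μ_M χ_M(g)` is therefore unchanged by
`g ↦ h g` for `h ∈ G'`: all fibres of `b ↦ [a, b]` over `G'` have the same size
`|G| / |G'|`. For central `a` the only nonempty fibre is the one over `1`, and summing over
`a` gives both formulas.
-/

open CategoryTheory Finset Module LinearMap MonoidAlgebra
open scoped MonoidAlgebra

universe u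

namespace FDRep

variable {k G V : Type u} [Field k] [Monoid G] [AddCommGroup V] [Module k V]
  [FiniteDimensional k V]

theorem simple_of_isIrreducible (ρ : Representation k G V) [ρ.IsIrreducible] :
    Simple (FDRep.of ρ) := by
  refine ⟨fun {Y} f _ => ⟨fun _ hf => ?_, fun hf => ?_⟩⟩
  · refine bot_ne_top (α := Subrepresentation ρ)
      (SetLike.ext fun v => ⟨fun _ => trivial, fun _ => ?_⟩)
    have hv := congr(($(IsIso.inv_hom_id f)).hom v)
    simp only [hf, Limits.comp_zero] at hv
    exact hv.symm
  · have hcomm (g : G) (y : Y) : f.hom (Y.ρ g y) = ρ g (f.hom y) := congr($(f.comm g) y)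
    let R : Subrepresentation ρ :=
      ⟨LinearMap.range f.hom.hom.hom, fun g _ ⟨y, hy⟩ => ⟨Y.ρ g y, hy ▸ hcomm g y⟩⟩
    have hR : R = ⊤ := (eq_bot_or_eq_top R).resolve_left fun h => hf <| by
      ext y
      have : f.hom y ∈ R := LinearMap.mem_range_self _ y
      rw [h] at this
      exact this
    have : Epi f := (forget₂ (FDRep k G) (Rep k G)).epi_of_epi_map <|
      (Rep.epi_iff_surjective _).2 fun v => (show v ∈ R from hR ▸ trivial)
    exact isIso_of_mono_of_epi f

end FDRep

namespace Representation

section ofModule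

variable {k G M : Type*} [Field k] [Monoid G] [AddCommGroup M] [Module k M] [Module k[G] M]
  [IsScalarTower k k[G] M]

noncomputable def subrepresentationOfModule'OrderIso :
    Subrepresentation (ofModule' (k := k) (G := G) M) ≃o Submodule k[G] M where
  toFun σ :=
    { σ.toSubmodule with
      smul_mem' x m hm := by
        induction x using MonoidAlgebra.induction_on with
        | of g => exact σ.apply_mem_toSubmodule g hm
        | add x y hx hy => rw [add_smul]; exact σ.toSubmodule.add_mem hx hy
        | smul r x hx => rw [smul_assoc]; exact σ.toSubmodule.smul_mem r hx }
  invFun N := ⟨N.restrictScalars k, fun g _ hm => N.smul_mem _ hm⟩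
  left_inv _ := rfl
  right_inv _ := rfl
  map_rel_iff' := Iff.rfl

instance isIrreducible_ofModule' [IsSimpleModule k[G] M] :
    (ofModule' (k := k) (G := G) M).IsIrreducible :=
  subrepresentationOfModule'OrderIso.isSimpleOrder_iff.mpr inferInstance

end ofModule

variable {k G V : Type*} [Field k] [Group G] [AddCommGroup V] [Module k V]
  (ρ : Representation k G V)

theorem character_mul_of_finrank_eq_one (hV : finrank k V = 1) (g h : G) :
    ρ.character (g * h) = ρ.character g * ρ.character h := by
  have : FiniteDimensional k V := .of_finrank_eq_succ hV
  obtain ⟨c, hc, -⟩ := existsUnique_eq_smul_id_of_finrank_eq_one hV (ρ g)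
  obtain ⟨d, hd, -⟩ := existsUnique_eq_smul_id_of_finrank_eq_one hV (ρ h)
  simp [character, hc, hd, hV, Module.End.mul_eq_comp, mul_comm]

theorem character_mul_eq_of_mem_commutator (hV : finrank k V = 1) {h : G}
    (hh : h ∈ commutator G) (g : G) : ρ.character (h * g) = ρ.character g := by
  have : FiniteDimensional k V := .of_finrank_eq_succ hV
  let χ : G →* k :=
    { toFun := ρ.character
      map_one' := by simp [hV]
      map_mul' := ρ.character_mul_of_finrank_eq_one hV }
  have hχh : χ.toHomUnits h = 1 := Abelianization.commutator_subset_ker _ hh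
  change χ (h * g) = χ g
  rw [map_mul, ← χ.coe_toHomUnits, hχh, Units.val_one, one_mul]

end Representation

theorem IsSimpleModule.exists_forall_smul_eq_smul_of_mem_center (k : Type*) {A M : Type*}
    [Field k] [IsAlgClosed k] [Ring A] [Algebra k A] [AddCommGroup M] [Module k M] [Module A M]
    [IsScalarTower k A M] [IsSimpleModule A M] [FiniteDimensional k M] {c : A}
    (hc : c ∈ Set.center A) : ∃ μ : k, ∀ m : M, c • m = μ • m := by
  let φ : Module.End A M :=
    { toFun m := c • m
      map_add' := smul_add c
      map_smul' x m := by
        rw [smul_smul, ← Semigroup.mem_center_iff.mp hc x, mul_smul]; rfl }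
  obtain ⟨μ, hμ⟩ := (IsSimpleModule.algebraMap_end_bijective_of_isAlgClosed k).2 φ
  exact ⟨μ, fun m => (congr($hμ m)).symm⟩

theorem LinearMap.trace_lsmul_eq_of_forall_isSimpleModule {k A M : Type*} [Field k] [Ring A]
    [Algebra k A] [AddCommGroup M] [Module k M] [Module A M] [IsScalarTower k A M]
    [IsSemisimpleModule A M] [FiniteDimensional k M] {x y : A}
    (h : ∀ N : Submodule A M, IsSimpleModule A N →
      trace k N (Algebra.lsmul k k N x) = trace k N (Algebra.lsmul k k N y)) :
    trace k M (Algebra.lsmul k k M x) = trace k M (Algebra.lsmul k k M y) := by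
  obtain ⟨s, hind, hsup, hsimple⟩ := IsSemisimpleModule.exists_sSupIndep_sSup_simples_eq_top A M
  have : IsNoetherian A M := isNoetherian_of_tower k inferInstance
  have : Fintype s := (WellFoundedGT.finite_of_sSupIndep hind).fintype
  have hint : DirectSum.IsInternal fun N : s => (N : Submodule A M) :=
    DirectSum.isInternal_submodule_of_iSupIndep_of_iSup_eq_top ((sSupIndep_iff s).mp hind)
      (by rwa [← sSup_eq_iSup'])
  have hint' : DirectSum.IsInternal fun N : s => (N : Submodule A M).restrictScalars k := hint
  have hmaps (z : A) (N : s) : Set.MapsTo (Algebra.lsmul k k M z)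
      ((N : Submodule A M).restrictScalars k) ((N : Submodule A M).restrictScalars k) :=
    fun _ hm => (N : Submodule A M).smul_mem z hm
  rw [trace_eq_sum_trace_restrict hint' (hmaps x), trace_eq_sum_trace_restrict hint' (hmaps y)]
  exact Finset.sum_congr rfl fun N _ => h N (hsimple N N.2)

namespace MonoidAlgebra

variable {k G : Type*} [Group G] [Fintype G]

variable (k) in
noncomputable def conjSum [CommSemiring k] (a : G) : k[G] := ∑ b : G, single (b⁻¹ * a * b) 1

theorem conjSum_mem_center [CommSemiring k] (a : G) : conjSum k a ∈ Set.center k[G] := by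
  refine Semigroup.mem_center_iff.mpr fun x => ?_
  induction x using MonoidAlgebra.induction_on with
  | of g =>
    simp only [conjSum, Finset.mul_sum, Finset.sum_mul, of_apply, single_mul_single, one_mul]
    exact Fintype.sum_equiv (Equiv.mulRight g⁻¹) _ _ fun b => by simp [mul_assoc]
  | add x y hx hy => rw [add_mul, mul_add, hx, hy]
  | smul r x hx => rw [smul_mul_assoc, hx, mul_smul_comm]

theorem trace_lsmul_single [CommRing k] [DecidableEq G] (g : G) :
    trace k k[G] (Algebra.lsmul k k k[G] (single g (1 : k))) =
      if g = 1 then (Fintype.card G : k) else 0 := by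
  have hdiag (x : G) : (MonoidAlgebra.basis G k).repr (single (g * x) 1) x =
      if g = 1 then 1 else 0 := by
    show (single (g * x) (1 : k)).coeff x = _
    simp [Finsupp.single_apply]
  rw [trace_eq_matrix_trace k (MonoidAlgebra.basis G k), Matrix.trace]
  simp [toMatrix_apply, hdiag]

theorem trace_lsmul_conjSum_mul_single [CommRing k] [DecidableEq G] (a y : G) :
    trace k k[G] (Algebra.lsmul k k k[G] (conjSum k a * single y 1)) =
      Fintype.card G * #{b | b⁻¹ * a * b * y = 1} := by
  simp [conjSum, Finset.sum_mul, map_sum, trace_lsmul_single, Finset.sum_ite, mul_comm]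

theorem trace_lsmul_conjSum [Field k] {M : Type*} [AddCommGroup M] [Module k M] [Module k[G] M]
    [IsScalarTower k k[G] M] (a : G) :
    trace k M (Algebra.lsmul k k M (conjSum k a)) =
      Fintype.card G * (Representation.ofModule' (k := k) (G := G) M).character a := by
  have hconj (b : G) : trace k M (Algebra.lsmul k k M (single (b⁻¹ * a * b) (1 : k))) =
      (Representation.ofModule' (k := k) (G := G) M).character a := by
    have := (Representation.ofModule' (k := k) (G := G) M).char_conj a b⁻¹
    rwa [inv_inv] at this
  simp [conjSum, hconj]

end MonoidAlgebra

section Commutator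

variable {G : Type} [Group G]

theorem wcomm_eq_iff (a b g : G) : wcomm a b = g ↔ b⁻¹ * a * b * (g⁻¹ * a⁻¹) = 1 := by
  rw [mul_eq_one_iff_eq_inv, mul_inv_rev, inv_inv, inv_inv, ← inv_mul_eq_iff_eq_mul]
  simp only [wcomm, mul_assoc]

open scoped commutatorElement in
theorem wcomm_mem_commutator (a b : G) : wcomm a b ∈ commutator G := by
  have : wcomm a b = ⁅a⁻¹, b⁻¹⁆ := by simp [wcomm, commutatorElement_def]
  rw [this, commutator_def]
  exact Subgroup.commutator_mem_commutator (Subgroup.mem_top _) (Subgroup.mem_top _)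

theorem wcomm_eq_one_of_mem_center {a : G} (ha : a ∈ Subgroup.center G) (b : G) :
    wcomm a b = 1 := by
  rw [wcomm, mul_assoc _ a, ← Subgroup.mem_center_iff.mp ha b]
  group

end Commutator

def IsGeneralizedCaminaPair {G : Type} [Group G] (N : Subgroup G) : Prop :=
  ∀ χ : G → ℂ, IsIrrChar G χ → χ 1 ≠ 1 → ∀ g : G, g ∉ N → χ g = 0

section CaminaPair

variable {G : Type} [Group G] [Fintype G] {N : Subgroup G}

theorem trace_lsmul_conjSum_mul_single_mul_eq (hN : IsGeneralizedCaminaPair N)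
    {a h : G} (ha : a ∉ N) (hh : h ∈ commutator G) (M : Type) [AddCommGroup M]
    [Module ℂ M] [Module ℂ[G] M] [IsScalarTower ℂ ℂ[G] M] [IsSimpleModule ℂ[G] M]
    [FiniteDimensional ℂ M] (g : G) :
    trace ℂ M (Algebra.lsmul ℂ ℂ M (conjSum ℂ a * single (h * g) 1)) =
      trace ℂ M (Algebra.lsmul ℂ ℂ M (conjSum ℂ a * single g 1)) := by
  set ρ := Representation.ofModule' (k := ℂ) (G := G) M
  obtain ⟨μ, hμ⟩ := IsSimpleModule.exists_forall_smul_eq_smul_of_mem_center ℂ (M := M)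
    (conjSum_mem_center (k := ℂ) a)
  have htrace (x : G) :
      trace ℂ M (Algebra.lsmul ℂ ℂ M (conjSum ℂ a * single x 1)) = μ * ρ.character x := by
    rw [map_mul, show Algebra.lsmul ℂ ℂ M (conjSum ℂ a) = μ • 1 from LinearMap.ext hμ,
      smul_mul_assoc, one_mul, map_smul, smul_eq_mul]
    rfl
  rw [htrace, htrace]
  by_cases hlin : finrank ℂ M = 1
  · rw [ρ.character_mul_eq_of_mem_commutator hlin hh]
  · have hirr : IsIrrChar G ρ.character :=
      ⟨FDRep.of ρ, FDRep.simple_of_isIrreducible ρ, rfl⟩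
    have hχ1 : ρ.character 1 ≠ 1 := by rw [Representation.char_one]; exact_mod_cast hlin
    have hμ0 : μ * finrank ℂ M = 0 := by
      have := htrace 1
      rwa [← one_def, mul_one, trace_lsmul_conjSum, hN _ hirr hχ1 a ha, mul_zero,
        Representation.char_one, eq_comm] at this
    have : Nontrivial M := IsSimpleModule.nontrivial ℂ[G] M
    rw [(mul_eq_zero.mp hμ0).resolve_right (Nat.cast_ne_zero.mpr finrank_pos.ne'), zero_mul,
      zero_mul]

variable [DecidableEq G]

theorem card_wcomm_eq_card_wcomm_one (hN : IsGeneralizedCaminaPair N)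
    {a g : G} (ha : a ∉ N) (hg : g ∈ commutator G) :
    #{b | wcomm a b = g} = #{b | wcomm a b = 1} := by
  have htr := LinearMap.trace_lsmul_eq_of_forall_isSimpleModule (k := ℂ) (M := ℂ[G])
    fun P _ => trace_lsmul_conjSum_mul_single_mul_eq hN ha (inv_mem hg) P a⁻¹
  rw [trace_lsmul_conjSum_mul_single, trace_lsmul_conjSum_mul_single] at htr
  simp only [wcomm_eq_iff, inv_one, one_mul]
  exact_mod_cast mul_left_cancel₀ (Nat.cast_ne_zero.mpr Fintype.card_ne_zero) htr

theorem card_commutator_mul_card_wcomm (hN : IsGeneralizedCaminaPair N)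
    {a g : G} (ha : a ∉ N) (hg : g ∈ commutator G) :
    Nat.card (commutator G) * #{b | wcomm a b = g} = Fintype.card G := by
  classical
  have hfibres : ∑ x ∈ (commutator G : Set G).toFinset, #{b | wcomm a b = x} = Fintype.card G :=
    (card_eq_sum_card_fiberwise fun b _ => Set.mem_toFinset.mpr (wcomm_mem_commutator a b)).symm
  rw [sum_congr rfl fun x hx => card_wcomm_eq_card_wcomm_one hN ha (Set.mem_toFinset.mp hx),
    sum_const, smul_eq_mul, ← Nat.card_eq_card_toFinset] at hfibres
  rwa [card_wcomm_eq_card_wcomm_one hN ha hg]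

theorem card_wcomm_pairs_eq (hZ : IsGeneralizedCaminaPair (Subgroup.center G))
    {g : G} (hg : g ∈ commutator G) :
    (Nat.card {p : G × G // wcomm p.1 p.2 = g} : ℂ) =
      (if g = 1 then (Nat.card (Subgroup.center G) : ℂ) * Fintype.card G else 0) +
        (Fintype.card G - Nat.card (Subgroup.center G)) *
          (Fintype.card G / Nat.card (commutator G)) := by
  have hfibre (a : G) : (#{b | wcomm a b = g} : ℂ) =
      if a ∈ Subgroup.center G then (if g = 1 then (Fintype.card G : ℂ) else 0)
      else Fintype.card G / Nat.card (commutator G) := by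
    split_ifs with ha hg1
    · simp [hg1, wcomm_eq_one_of_mem_center ha]
    · simp [wcomm_eq_one_of_mem_center ha, Ne.symm hg1]
    · rw [eq_div_iff (Nat.cast_ne_zero.mpr Nat.card_pos.ne'), mul_comm]
      exact_mod_cast card_commutator_mul_card_wcomm hZ ha hg
  have hpairs : Nat.card {p : G × G // wcomm p.1 p.2 = g} = ∑ a, #{b | wcomm a b = g} := by
    rw [Nat.card_congr (Equiv.subtypeProdEquivSigmaSubtype fun a b => wcomm a b = g),
      Nat.card_sigma]
    simp only [Nat.card_eq_fintype_card, Fintype.card_subtype]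
  have hcenter : #{a | a ∈ Subgroup.center G} = Nat.card (Subgroup.center G) := by
    rw [Nat.card_eq_fintype_card, Fintype.card_subtype]
  have hcompl : (#{a | a ∉ Subgroup.center G} : ℂ) =
      Fintype.card G - Nat.card (Subgroup.center G) := by
    rw [eq_sub_iff_add_eq', ← hcenter]
    exact_mod_cast card_filter_add_card_filter_not (s := univ) (· ∈ Subgroup.center G)
  rw [hpairs, Nat.cast_sum]
  simp only [hfibre]
  rw [sum_ite, sum_const, sum_const, nsmul_eq_mul, nsmul_eq_mul, hcenter, hcompl]
  split_ifs <;> ring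

end CaminaPair

theorem stmt_8_general {G : Type} [Group G] [Fintype G]
    (hGCP : ∀ χ : G → ℂ, IsIrrChar G χ → χ 1 ≠ 1 →
      ∀ g : G, g ∉ Subgroup.center G → χ g = 0) :
    (∀ g : G, g ∈ commutator G → g ≠ 1 →
      (Nat.card {p : G × G // wcomm p.1 p.2 = g} : ℂ) =
        (Fintype.card G : ℂ) ^ 2 / (Nat.card ↥(commutator G) : ℂ) *
          (1 - 1 / ((Subgroup.center G).index : ℂ))) ∧
    (Nat.card {p : G × G // wcomm p.1 p.2 = (1 : G)} : ℂ) =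
      (Fintype.card G : ℂ) ^ 2 / (Nat.card ↥(commutator G) : ℂ) *
        (1 + ((Nat.card ↥(commutator G) : ℂ) - 1) / ((Subgroup.center G).index : ℂ)) := by
  classical
  have hindex : (Nat.card (Subgroup.center G) : ℂ) * (Subgroup.center G).index =
      Fintype.card G := by
    exact_mod_cast (Subgroup.center G).card_mul_index.trans Nat.card_eq_fintype_card
  have hG' : (Nat.card (commutator G) : ℂ) ≠ 0 := Nat.cast_ne_zero.mpr Nat.card_pos.ne'
  have hindex_ne : ((Subgroup.center G).index : ℂ) ≠ 0 :=
    Nat.cast_ne_zero.mpr Subgroup.index_ne_zero_of_finite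
  refine ⟨fun g hg hg1 => ?_, ?_⟩
  · rw [card_wcomm_pairs_eq hGCP hg, if_neg hg1]
    field_simp
    linear_combination -(Fintype.card G : ℂ) * hindex
  · rw [card_wcomm_pairs_eq hGCP (one_mem _), if_pos rfl]
    field_simp
    linear_combination ((Nat.card (commutator G) : ℂ) - 1) * hindex

theorem stmt_8 {G : Type} [Group G] [Fintype G]
    (hna : ∃ a b : G, a * b ≠ b * a)
    (hGCP : ∀ χ : G → ℂ, IsIrrChar G χ → χ 1 ≠ 1 →
      ∀ g : G, g ∉ Subgroup.center G → χ g = 0) :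
    (∀ g : G, g ∈ commutator G → g ≠ 1 →
      (Nat.card {p : G × G // wcomm p.1 p.2 = g} : ℂ) =
        (Fintype.card G : ℂ) ^ 2 / (Nat.card ↥(commutator G) : ℂ) *
          (1 - 1 / ((Subgroup.center G).index : ℂ))) ∧
    (Nat.card {p : G × G // wcomm p.1 p.2 = (1 : G)} : ℂ) =
      (Fintype.card G : ℂ) ^ 2 / (Nat.card ↥(commutator G) : ℂ) *
        (1 + ((Nat.card ↥(commutator G) : ℂ) - 1) / ((Subgroup.center G).index : ℂ)) :=
  stmt_8_general hGCP
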